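/- Let A ∈ Mat₂(F) satisfy det A = 0 and have all four entries nonzero. Then exactly half of the entrywise square roots of A have determinant zero: 2·card{B ∈ Mat₂(F) : B_{ij}² = A_{ij} for all 1 ≤ i,j ≤ 2 and det B = 0} = card{B ∈ Mat₂(F) : B_{ij}² = A_{ij} for all 1 ≤ i,j ≤ 2}. -/
import Mathlib


/-- Let `F` be a finite field of odd cardinality and let `A ∈ Mat₂(F)` satisfy
`det A = 0` with all four entries nonzero.  Then exactly half of the entrywise square roots of
`A` have determinant zero. -/
theorem stmt_1 {F : Type*} [Field F] [Fintype F] (hodd : Odd (Fintype.card F))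
    (A : Matrix (Fin 2) (Fin 2) F) (hdet : A.det = 0) (hne : ∀ i j, A i j ≠ 0) :
    2 * {B : Matrix (Fin 2) (Fin 2) F | (∀ i j, B i j ^ 2 = A i j) ∧ B.det = 0}.ncard =
      {B : Matrix (Fin 2) (Fin 2) F | ∀ i j, B i j ^ 2 = A i j}.ncard := by
  have htwo : (2 : F) ≠ 0 := by
    apply Ring.two_ne_zero
    intro h
    have := FiniteField.even_card_of_char_two h
    rw [Nat.odd_iff] at hodd
    omega
  set T : Set (Matrix (Fin 2) (Fin 2) F) := {B | ∀ i j, B i j ^ 2 = A i j} with hT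
  set S0 : Set (Matrix (Fin 2) (Fin 2) F) := {B | (∀ i j, B i j ^ 2 = A i j) ∧ B.det = 0}
  set S1 : Set (Matrix (Fin 2) (Fin 2) F) := {B | (∀ i j, B i j ^ 2 = A i j) ∧ B.det ≠ 0}
  -- entries of elements of T are nonzero
  have hBne : ∀ B ∈ T, ∀ i j, B i j ≠ 0 := by
    intro B hB i j h
    exact hne i j (by rw [← hB i j, h]; ring)
  -- the involution flipping the (0,0) entry
  set σ : Matrix (Fin 2) (Fin 2) F → Matrix (Fin 2) (Fin 2) F :=
    fun B => Matrix.of (fun i j => if i = 0 ∧ j = 0 then -(B i j) else B i j) with hσ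
  have hσT : ∀ B ∈ T, σ B ∈ T := by
    intro B hB i j
    simp only [hσ, Matrix.of_apply]
    split <;> [rw [neg_pow, ← hB i j]; rw [← hB i j]] <;> ring
  have hdetσ : ∀ B : Matrix (Fin 2) (Fin 2) F,
      (σ B).det = -(B 0 0) * B 1 1 - B 0 1 * B 1 0 := by
    intro B
    rw [Matrix.det_fin_two]
    simp [hσ]
  -- σ maps S0 into S1
  have h01 : ∀ B ∈ S0, σ B ∈ S1 := by
    rintro B ⟨hB, hd⟩
    refine ⟨hσT B hB, ?_⟩
    rw [Matrix.det_fin_two] at hd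
    rw [hdetσ]
    have h2 : B 0 1 * B 1 0 = B 0 0 * B 1 1 := by linear_combination -hd
    rw [h2]
    intro h
    have : -(2 : F) * (B 0 0 * B 1 1) = 0 := by linear_combination h
    rcases mul_eq_zero.mp this with h | h
    · exact htwo (by linear_combination -h)
    · rcases mul_eq_zero.mp h with h | h
      exacts [hBne B hB 0 0 h, hBne B hB 1 1 h]
  -- σ maps S1 into S0
  have h10 : ∀ B ∈ S1, σ B ∈ S0 := by
    rintro B ⟨hB, hd⟩
    refine ⟨hσT B hB, ?_⟩
    rw [Matrix.det_fin_two] at hd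
    rw [hdetσ]
    have key : (B 0 0 * B 1 1) * (B 0 0 * B 1 1) = (B 0 1 * B 1 0) * (B 0 1 * B 1 0) := by
      have e : ∀ i j, B i j ^ 2 = A i j := hB
      have hA : A 0 0 * A 1 1 - A 0 1 * A 1 0 = 0 := by
        rw [← Matrix.det_fin_two]; exact hdet
      linear_combination hA + B 1 1 ^ 2 * e 0 0 + A 0 0 * e 1 1 - B 1 0 ^ 2 * e 0 1 - A 0 1 * e 1 0
    rcases mul_self_eq_mul_self_iff.mp key with h | h
    · exact absurd (by linear_combination h) hd
    · linear_combination -h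
  have hσσ : ∀ B, σ (σ B) = B := by
    intro B
    ext i j
    simp only [hσ, Matrix.of_apply]
    split <;> simp
  -- image and injectivity
  have himg : σ '' S0 = S1 := by
    apply Set.eq_of_subset_of_subset
    · rintro _ ⟨B, hB, rfl⟩; exact h01 B hB
    · intro B hB
      exact ⟨σ B, h10 B hB, hσσ B⟩
  have hinj : Set.InjOn σ S0 := by
    intro a _ b _ h
    rw [← hσσ a, h, hσσ b]
  have hcard : S0.ncard = S1.ncard := by
    rw [← himg, Set.ncard_image_of_injOn hinj]
  -- T = S0 ∪ S1 disjoint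
  have hunion : T = S0 ∪ S1 := by
    ext B
    simp only [Set.mem_union, Set.mem_setOf_eq, hT]
    constructor
    · intro h
      by_cases hd : B.det = 0
      · exact Or.inl ⟨h, hd⟩
      · exact Or.inr ⟨h, hd⟩
    · rintro (⟨h, _⟩ | ⟨h, _⟩) <;> exact h
  have hdisj : Disjoint S0 S1 := by
    rw [Set.disjoint_left]
    rintro B ⟨_, h0⟩ ⟨_, h1⟩
    exact h1 h0
  rw [hunion, Set.ncard_union_eq hdisj (Set.toFinite _) (Set.toFinite _), ← hcard]
  ring
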